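/- arXiv:math/0509315 — 6 statements merged into one kernel-verified Lean document; each statement's English description precedes it below -/
import Mathlib

section
/- Let (a_n) be a bounded sequence of real numbers and let T_N = (1/N) ∑_{n=1}^N a_n. Then T_N converges to a limit t if and only if there exists a strictly increasing sequence of indices N_i with N_i / N_{i+1} → 1 such that T_{N_i} → t. -/
/-!
For `M ≤ N` the averages `T M` and `T N` of a sequence bounded by `C` differ by at most
`2C(1 - M/N)`. So if `T` converges to `t` along `N'` with `N' i / N' (i+1) → 1`, every `N` in a
block `[N' i, N' (i+1))` has `T N` within `2C(1 - N' i / N' (i+1)) → 0` of `T (N' i) → t`.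
The converse direction takes `N' = id`.
-/

open Filter Finset Topology

lemma abs_sum_Ioc_le_mul {a : ℕ → ℝ} {C : ℝ} (hbd : ∀ n, |a n| ≤ C) {M N : ℕ} (hMN : M ≤ N) :
    |∑ n ∈ Ioc M N, a n| ≤ C * ((N : ℝ) - M) := by
  calc |∑ n ∈ Ioc M N, a n| ≤ ∑ n ∈ Ioc M N, |a n| := abs_sum_le_sum_abs _ _
    _ ≤ (Ioc M N).card • C := sum_le_card_nsmul _ _ _ fun n _ => hbd n
    _ = C * ((N : ℝ) - M) := by rw [Nat.card_Ioc, nsmul_eq_mul, Nat.cast_sub hMN, mul_comm]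

lemma abs_average_sub_average_le {a : ℕ → ℝ} {C : ℝ} (hbd : ∀ n, |a n| ≤ C) {M N : ℕ}
    (hM : 0 < M) (hMN : M ≤ N) :
    |1 / (N : ℝ) * ∑ n ∈ Icc 1 N, a n - 1 / (M : ℝ) * ∑ n ∈ Icc 1 M, a n|
      ≤ 2 * C * (1 - (M : ℝ) / N) := by
  have hMpos : (0 : ℝ) < M := by exact_mod_cast hM
  have hNpos : (0 : ℝ) < N := by exact_mod_cast hM.trans_le hMN
  have hgap : 0 ≤ 1 - (M : ℝ) / N := sub_nonneg.2 ((div_le_one hNpos).2 (by exact_mod_cast hMN))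
  have hIcc (k : ℕ) : Icc 1 k = Ioc 0 k := Icc_succ_left_eq_Ioc 0 k
  rw [hIcc, hIcc, ← sum_Ioc_consecutive a (Nat.zero_le M) hMN]
  set S := ∑ n ∈ Ioc 0 M, a n
  set R := ∑ n ∈ Ioc M N, a n
  have hS : |S| ≤ C * M := by simpa using abs_sum_Ioc_le_mul hbd (Nat.zero_le M)
  have hR : |R| ≤ C * ((N : ℝ) - M) := abs_sum_Ioc_le_mul hbd hMN
  have hsplit : 1 / (N : ℝ) * (S + R) - 1 / M * S = R / N - S / M * (1 - M / N) := by
    field_simp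
    ring
  calc |1 / (N : ℝ) * (S + R) - 1 / M * S|
      ≤ |R| / N + |S| / M * (1 - M / N) := by
        rw [hsplit]
        refine (abs_sub _ _).trans ?_
        rw [abs_div, abs_mul, abs_div, abs_of_pos hNpos, abs_of_pos hMpos, abs_of_nonneg hgap]
    _ ≤ C * (N - M) / N + C * M / M * (1 - M / N) := by gcongr
    _ = 2 * C * (1 - (M : ℝ) / N) := by field_simp; ring

/-- The index `i` of the block `[N' i, N' (i+1))` containing `N`. -/
def blockIndex (N' : ℕ → ℕ) (N : ℕ) : ℕ := Nat.findGreatest (fun j => N' j ≤ N) N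

section blockIndex

variable {N' : ℕ → ℕ} {N : ℕ}

lemma apply_blockIndex_le (hN : N' 0 ≤ N) : N' (blockIndex N' N) ≤ N :=
  Nat.findGreatest_spec (P := fun j => N' j ≤ N) (Nat.zero_le N) hN

lemma lt_apply_blockIndex_add_one (hN' : StrictMono N') : N < N' (blockIndex N' N + 1) := by
  by_contra! h
  exact Nat.findGreatest_is_greatest (Nat.lt_succ_self _) ((hN'.id_le _).trans h) h

lemma tendsto_blockIndex_atTop (hN' : StrictMono N') : Tendsto (blockIndex N') atTop atTop :=
  tendsto_atTop_atTop.2 fun i => ⟨N' i, fun _ hN =>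
    Nat.le_findGreatest (P := fun j => N' j ≤ _) ((hN'.id_le i).trans hN) hN⟩

end blockIndex

lemma tendsto_atTop_of_tendsto_comp_of_dist_le {α : Type*} [PseudoMetricSpace α]
    {f : ℕ → α} {N' : ℕ → ℕ} (hN' : StrictMono N') {t : α} {g : ℕ → ℝ}
    (hf : Tendsto (f ∘ N') atTop (𝓝 t)) (hg : Tendsto g atTop (𝓝 0))
    (hdist : ∀ᶠ i in atTop, ∀ N, N' i ≤ N → N < N' (i + 1) → dist (f N) (f (N' i)) ≤ g i) :
    Tendsto f atTop (𝓝 t) := by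
  have hk := tendsto_blockIndex_atTop hN'
  have hclose : Tendsto (fun N => dist (f (N' (blockIndex N' N))) (f N)) atTop (𝓝 0) := by
    refine squeeze_zero' (Eventually.of_forall fun _ => dist_nonneg) ?_ (hg.comp hk)
    filter_upwards [hk.eventually hdist, eventually_ge_atTop (N' 0)] with N hN h0
    rw [dist_comm]
    exact hN N (apply_blockIndex_le h0) (lt_apply_blockIndex_add_one hN')
  exact tendsto_of_tendsto_of_dist (hf.comp hk) hclose

theorem cesaro_limit_iff_ratio_subsequence
    (a : ℕ → ℝ) (C : ℝ) (hbd : ∀ n, |a n| ≤ C)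
    (T : ℕ → ℝ) (hT : ∀ N, T N = (1 / (N : ℝ)) * ∑ n ∈ Finset.Icc 1 N, a n)
    (t : ℝ) :
    Filter.Tendsto T Filter.atTop (nhds t) ↔
      ∃ N' : ℕ → ℕ, StrictMono N' ∧
        Filter.Tendsto (fun i => (N' i : ℝ) / (N' (i + 1) : ℝ)) Filter.atTop (nhds 1) ∧
        Filter.Tendsto (fun i => T (N' i)) Filter.atTop (nhds t) := by
  constructor
  · intro h
    exact ⟨id, strictMono_id, by simpa using tendsto_natCast_div_add_atTop (1 : ℝ), h⟩
  · rintro ⟨N', hN', hratio, hlim⟩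
    have hC : 0 ≤ C := (abs_nonneg _).trans (hbd 0)
    refine tendsto_atTop_of_tendsto_comp_of_dist_le hN' hlim
      (g := fun i => 2 * C * (1 - (N' i : ℝ) / N' (i + 1)))
      (by simpa using (hratio.const_sub 1).const_mul (2 * C)) ?_
    filter_upwards [eventually_gt_atTop 0] with i hi N hlo hhi
    have hpos : 0 < N' i := (Nat.zero_le _).trans_lt (hN' hi)
    calc dist (T N) (T (N' i)) ≤ 2 * C * (1 - (N' i : ℝ) / N) := by
          rw [Real.dist_eq, hT, hT]
          exact abs_average_sub_average_le hbd hpos hlo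
      _ ≤ 2 * C * (1 - (N' i : ℝ) / N' (i + 1)) := by
          have hN : (0 : ℝ) < N := by exact_mod_cast hpos.trans_le hlo
          gcongr
end

section
/- Let (a_n) be a bounded sequence of real numbers and T_N = (1/N) ∑_{n=1}^N a_n. If T_{N^{40}} → 0 as N → ∞, then T_N → 0. -/
/-!
Given `N`, let `k^40 ≤ N < (k+1)^40`. Splitting the sum defining `T N` at `k^40`, the head
contributes at most `|T (k^40)|` and the tail, having at most `N - k^40` terms of size `≤ C`,
at most `C (N / k^40 - 1) ≤ C (((k+1)/k)^40 - 1)`. Both bounds tend to `0`. The argument works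
for any strictly increasing index sequence `φ` with `φ (k+1) / φ k → 1`.
-/

open Filter Finset Topology

noncomputable def cesaroMean (a : ℕ → ℝ) (N : ℕ) : ℝ := (1 / (N : ℝ)) * ∑ n ∈ Icc 1 N, a n

lemma abs_cesaroMean_le {a : ℕ → ℝ} {C : ℝ} (hbd : ∀ n, |a n| ≤ C) {K N : ℕ}
    (hK : 0 < K) (hKN : K ≤ N) :
    |cesaroMean a N| ≤ |cesaroMean a K| + C * ((N : ℝ) / K - 1) := by
  have hC : 0 ≤ C := (abs_nonneg _).trans (hbd 0)
  have hK' : (0 : ℝ) < K := by exact_mod_cast hK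
  have hKN' : (K : ℝ) ≤ N := by exact_mod_cast hKN
  have hN' : (0 : ℝ) < N := hK'.trans_le hKN'
  have hsplit : ∑ n ∈ Icc 1 N, a n = ∑ n ∈ Icc 1 K, a n + ∑ n ∈ Ioc K N, a n := by
    have hIcc : ∀ M : ℕ, Icc 1 M = Ioc 0 M := Icc_add_one_left_eq_Ioc 0
    rw [hIcc, hIcc, sum_Ioc_consecutive _ K.zero_le hKN]
  have htail : |∑ n ∈ Ioc K N, a n| ≤ ((N : ℝ) - K) * C := by
    calc |∑ n ∈ Ioc K N, a n| ≤ ∑ n ∈ Ioc K N, |a n| := abs_sum_le_sum_abs _ _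
      _ ≤ ∑ _n ∈ Ioc K N, C := sum_le_sum fun n _ => hbd n
      _ = ((N : ℝ) - K) * C := by
        rw [sum_const, Nat.card_Ioc, nsmul_eq_mul, Nat.cast_sub hKN]
  have hmean : ∀ M : ℕ, |cesaroMean a M| = |∑ n ∈ Icc 1 M, a n| / M := fun M => by
    rw [cesaroMean, abs_mul, abs_of_nonneg (by positivity), one_div_mul_eq_div]
  rw [hmean, hmean]
  calc |∑ n ∈ Icc 1 N, a n| / N
      ≤ (|∑ n ∈ Icc 1 K, a n| + ((N : ℝ) - K) * C) / N := by
        gcongr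
        exact hsplit ▸ (abs_add_le _ _).trans (by linarith)
    _ ≤ |∑ n ∈ Icc 1 K, a n| / K + ((N : ℝ) - K) * C / K := by
        rw [add_div]
        gcongr
    _ = |∑ n ∈ Icc 1 K, a n| / K + C * ((N : ℝ) / K - 1) := by
        field_simp

lemma StrictMono.exists_tendsto_atTop_bracket {φ : ℕ → ℕ} (hφ : StrictMono φ) :
    ∃ m : ℕ → ℕ, Tendsto m atTop atTop ∧ ∀ᶠ N in atTop, φ (m N) ≤ N ∧ N < φ (m N + 1) := by
  refine ⟨fun N => Nat.findGreatest (fun k => φ k ≤ N) N, ?_, ?_⟩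
  · refine tendsto_atTop_atTop.2 fun b => ⟨φ b, fun N hN => ?_⟩
    exact Nat.le_findGreatest (hφ.le_apply.trans hN) hN
  · filter_upwards [eventually_ge_atTop (φ 0)] with N hN
    refine ⟨Nat.findGreatest_spec (P := fun k => φ k ≤ N) N.zero_le hN, ?_⟩
    by_contra! hle
    exact Nat.findGreatest_is_greatest (Nat.lt_succ_self _) (hφ.le_apply.trans hle) hle

lemma tendsto_succ_pow_div_pow (d : ℕ) :
    Tendsto (fun k : ℕ => (((k + 1) ^ d : ℕ) : ℝ) / ((k ^ d : ℕ) : ℝ)) atTop (𝓝 1) := by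
  have hratio : Tendsto (fun k : ℕ => ((k : ℝ) + 1) / k) atTop (𝓝 1) := by
    simpa [add_comm] using tendsto_add_mul_div_add_mul_atTop_nhds (1 : ℝ) 0 1 one_ne_zero
  simpa [div_pow] using hratio.pow d

theorem tendsto_cesaroMean_of_tendsto_comp {a : ℕ → ℝ} {C : ℝ} (hbd : ∀ n, |a n| ≤ C)
    {φ : ℕ → ℕ} (hφ : StrictMono φ)
    (hratio : Tendsto (fun k => (φ (k + 1) : ℝ) / φ k) atTop (𝓝 1))
    (h : Tendsto (cesaroMean a ∘ φ) atTop (𝓝 0)) :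
    Tendsto (cesaroMean a) atTop (𝓝 0) := by
  have hC : 0 ≤ C := (abs_nonneg _).trans (hbd 0)
  obtain ⟨m, hm, hbracket⟩ := hφ.exists_tendsto_atTop_bracket
  have hbound : Tendsto (fun N => |cesaroMean a (φ (m N))| +
      C * ((φ (m N + 1) : ℝ) / φ (m N) - 1)) atTop (𝓝 0) := by
    simpa [Function.comp_def] using (h.abs.add ((hratio.sub_const 1).const_mul C)).comp hm
  refine squeeze_zero_norm' ?_ hbound
  filter_upwards [hbracket, hm.eventually_ge_atTop 1] with N ⟨hle, hlt⟩ hm1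
  have hpos : 0 < φ (m N) := hm1.trans hφ.le_apply
  calc ‖cesaroMean a N‖ ≤ |cesaroMean a (φ (m N))| + C * ((N : ℝ) / φ (m N) - 1) :=
        abs_cesaroMean_le hbd hpos hle
    _ ≤ _ := by gcongr

theorem cesaro_limit_of_pow40_subsequence
    (a : ℕ → ℝ) (C : ℝ) (hbd : ∀ n, |a n| ≤ C)
    (T : ℕ → ℝ) (hT : ∀ N, T N = (1 / (N : ℝ)) * ∑ n ∈ Finset.Icc 1 N, a n)
    (h : Filter.Tendsto (fun N : ℕ => T (N ^ 40)) Filter.atTop (nhds 0)) :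
    Filter.Tendsto T Filter.atTop (nhds 0) := by
  obtain rfl : T = cesaroMean a := funext hT
  exact tendsto_cesaroMean_of_tendsto_comp hbd (Nat.pow_left_strictMono (by norm_num))
    (tendsto_succ_pow_div_pow 40) h
end

section
/- There exists a constant C (depending on k and i_1 < ... < i_k) such that for all N ≥ 1, ∑_{n=1}^N 2^{h(n)} ≤ C · N^{1.45}, where h(n) denotes the number of prime factors of the squarefree part of ξ(n) = n(n+i_1)⋯(n+i_k). -/
/-!
Since `h n ≤ ω(ξ n)`, it suffices to bound `2 ^ ω(m)`. Fix `T` with `T ^ ε ≥ 2`: at most `T` prime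
factors of `m` lie below `T`, and each of the others contributes a factor `2 ≤ p ^ ε`, whose product
is at most `m ^ ε`. So `2 ^ ω(m) ≤ 2 ^ T * m ^ ε`. With `ε = 0.45 / (k + 1)` and
`ξ n ≤ ((1 + ∑ i) N) ^ (k + 1)` for `n ≤ N`, each term is `O(N ^ 0.45)`, and there are `N` terms.
-/

open Finset

lemma two_pow_card_le_rpow_of_subset_primeFactors {ε : ℝ} (hε : 0 ≤ ε) {m : ℕ} (hm : m ≠ 0)
    {S : Finset ℕ} (hS : S ⊆ m.primeFactors) (hlarge : ∀ p ∈ S, 2 ≤ (p : ℝ) ^ ε) :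
    (2 : ℝ) ^ #S ≤ (m : ℝ) ^ ε := by
  have hdvd : ∏ p ∈ S, p ∣ m :=
    (prod_dvd_prod_of_subset _ _ _ hS).trans (Nat.prod_primeFactors_dvd m)
  calc (2 : ℝ) ^ #S = ∏ _p ∈ S, (2 : ℝ) := (prod_const _).symm
    _ ≤ ∏ p ∈ S, (p : ℝ) ^ ε := prod_le_prod (fun _ _ => zero_le_two) hlarge
    _ = ((∏ p ∈ S, p : ℕ) : ℝ) ^ ε := by
        rw [Nat.cast_prod, Real.finsetProd_rpow _ _ (fun p _ => Nat.cast_nonneg p)]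
    _ ≤ (m : ℝ) ^ ε := by
        gcongr
        exact_mod_cast Nat.le_of_dvd (Nat.pos_of_ne_zero hm) hdvd

lemma two_pow_card_primeFactors_le {ε : ℝ} (hε : 0 ≤ ε) {T : ℕ} (hT : 2 ≤ (T : ℝ) ^ ε)
    {m : ℕ} (hm : m ≠ 0) :
    (2 : ℝ) ^ #m.primeFactors ≤ 2 ^ T * (m : ℝ) ^ ε := by
  have hsmall : #(m.primeFactors.filter (· < T)) ≤ T := by
    simpa using card_le_card (s := m.primeFactors.filter (· < T)) (t := range T)
      (fun p hp => mem_range.2 (mem_filter.1 hp).2)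
  have hlarge : (2 : ℝ) ^ #(m.primeFactors.filter (¬ · < T)) ≤ (m : ℝ) ^ ε := by
    refine two_pow_card_le_rpow_of_subset_primeFactors hε hm (filter_subset _ _) fun p hp => ?_
    have hTp : T ≤ p := not_lt.1 (mem_filter.1 hp).2
    exact hT.trans (by gcongr)
  rw [← card_filter_add_card_filter_not (· < T), pow_add]
  gcongr
  exact one_le_two

lemma mul_prod_add_le_pow {ι : Type*} (n : ℕ) (s : Finset ι) (a : ι → ℕ) :
    n * ∏ j ∈ s, (n + a j) ≤ (n + ∑ j ∈ s, a j) ^ (#s + 1) := by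
  rw [pow_succ']
  gcongr
  · exact Nat.le_add_right _ _
  · exact prod_le_pow_card _ _ _ fun j hj => by
      gcongr
      exact single_le_sum (fun _ _ => Nat.zero_le _) hj

lemma Real.rpow_div_natCast_le_of_le_pow {m x a : ℝ} {d : ℕ} (hm : 0 ≤ m) (hx : 0 ≤ x)
    (ha : 0 ≤ a) (hd : d ≠ 0) (h : m ≤ x ^ d) : m ^ (a / d) ≤ x ^ a := by
  rw [div_eq_inv_mul, Real.rpow_mul hm]
  calc (m ^ (d⁻¹ : ℝ)) ^ a ≤ ((x ^ d) ^ (d⁻¹ : ℝ)) ^ a := by gcongr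
    _ = x ^ a := by rw [Real.pow_rpow_inv_natCast hx hd]

theorem sum_two_pow_h_bound_general
    (k : ℕ) (i : Fin k → ℕ)
    (ξ : ℕ → ℕ) (hξ : ∀ x, ξ x = x * ∏ j, (x + i j))
    (h : ℕ → ℕ)
    (hh : ∀ x, h x =
      ((ξ x).primeFactors.filter fun p => Odd ((ξ x).factorization p)).card) :
    ∃ C : ℝ, ∀ N : ℕ, 1 ≤ N →
      ∑ n ∈ Finset.Icc 1 N, (2 : ℝ) ^ h n ≤ C * (N : ℝ) ^ (1.45 : ℝ) := by
  set M := ∑ j, i j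
  set ε : ℝ := 0.45 / (k + 1 : ℕ)
  obtain ⟨T, hT⟩ : ∃ T : ℕ, 2 ≤ (T : ℝ) ^ ε :=
    (((tendsto_rpow_atTop (by positivity)).comp
      tendsto_natCast_atTop_atTop).eventually_ge_atTop 2).exists
  refine ⟨2 ^ T * ((1 + M : ℕ) : ℝ) ^ (0.45 : ℝ), fun N hN => ?_⟩
  have hterm : ∀ n ∈ Icc 1 N, (2 : ℝ) ^ h n ≤ 2 ^ T * (((1 + M) * N : ℕ) : ℝ) ^ (0.45 : ℝ) := by
    intro n hn
    obtain ⟨hn1, hnN⟩ := mem_Icc.1 hn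
    have hξ0 : ξ n ≠ 0 := by rw [hξ]; positivity
    have hξle : ξ n ≤ ((1 + M) * N) ^ (k + 1) := by
      have hnM : n + M ≤ (1 + M) * N := by nlinarith
      have := mul_prod_add_le_pow n univ i
      rw [card_univ, Fintype.card_fin, ← hξ] at this
      exact this.trans (Nat.pow_le_pow_left hnM _)
    calc (2 : ℝ) ^ h n ≤ 2 ^ #(ξ n).primeFactors :=
          pow_le_pow_right₀ one_le_two (hh n ▸ card_filter_le _ _)
      _ ≤ 2 ^ T * (ξ n : ℝ) ^ ε := two_pow_card_primeFactors_le (by positivity) hT hξ0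
      _ ≤ 2 ^ T * (((1 + M) * N : ℕ) : ℝ) ^ (0.45 : ℝ) := by
          gcongr
          exact Real.rpow_div_natCast_le_of_le_pow (Nat.cast_nonneg _) (Nat.cast_nonneg _)
            (by norm_num) (Nat.succ_ne_zero k) (by exact_mod_cast hξle)
  have hN' : (0 : ℝ) < N := by exact_mod_cast hN
  calc ∑ n ∈ Icc 1 N, (2 : ℝ) ^ h n
      ≤ ∑ _n ∈ Icc 1 N, 2 ^ T * (((1 + M) * N : ℕ) : ℝ) ^ (0.45 : ℝ) := sum_le_sum hterm
    _ = 2 ^ T * ((1 + M : ℕ) : ℝ) ^ (0.45 : ℝ) * (N : ℝ) ^ (1.45 : ℝ) := by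
        rw [sum_const, Nat.card_Icc, nsmul_eq_mul, Nat.cast_mul,
          Real.mul_rpow (Nat.cast_nonneg _) hN'.le, show (1.45 : ℝ) = 1 + 0.45 by norm_num,
          Real.rpow_add hN', Real.rpow_one]
        push_cast
        ring

theorem sum_two_pow_h_bound
    (k : ℕ) (i : Fin k → ℕ) (hpos : ∀ j, 0 < i j) (hmono : StrictMono i)
    (ξ : ℕ → ℕ) (hξ : ∀ x, ξ x = x * ∏ j, (x + i j))
    (h : ℕ → ℕ)
    (hh : ∀ x, h x =
      ((ξ x).primeFactors.filter fun p => Odd ((ξ x).factorization p)).card) :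
    ∃ C : ℝ, ∀ N : ℕ, 1 ≤ N →
      ∑ n ∈ Finset.Icc 1 N, (2 : ℝ) ^ h n ≤ C * (N : ℝ) ^ (1.45 : ℝ) :=
  sum_two_pow_h_bound_general k i ξ hξ h hh
end

section
/- If A ⊆ ℕ is a normal set and a ∈ ℕ is positive, then A_a = {n ∈ ℕ : a·n ∈ A} is also a normal set. -/
open scoped Classical

/-- A set of natural numbers is *normal* if every nonempty binary word `w` occurs
in the indicator sequence of `A` (read off at positions 1, 2, 3, ...) with
asymptotic frequency `2 ^ (-|w|)`. -/
def IsNormalSet (A : Set ℕ) : Prop :=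
  ∀ w : List Bool, w ≠ [] →
    Filter.Tendsto
      (fun N : ℕ =>
        (((Finset.Icc 1 N).filter fun n =>
            ∀ i : Fin w.length, (n + (i : ℕ) ∈ A ↔ w.get i = true)).card : ℝ) / N)
      Filter.atTop (nhds (1 / 2 ^ w.length))

/-- `S` has natural density `d`. -/
def HasDensity (S : Set ℕ) (d : ℝ) : Prop :=
  Filter.Tendsto
    (fun N : ℕ => (((Finset.Icc 1 N).filter fun n => n ∈ S).card : ℝ) / N)
    Filter.atTop (nhds d)

/-!
Fix a word `w` and let `E` be the set of `x` at which `A` shows `w` spread out with gaps `a`,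
i.e. `x + a * i ∈ A ↔ w[i]` for `i < |w|`; we want `{n | a * n ∈ E}` to have density
`p = 2 ^ (-|w|)`. Normality, summed over all fillings of the unconstrained positions, gives every
sparse pattern on `k` positions density `2 ^ (-k)`. Hence `E` has density `p`, and for large `t`
the sets `E` and `E - t` (patterns on disjoint windows) are asymptotically independent. So
`z = 1_E - p` has mean zero and vanishing correlations at large lags, and van der Corput's
argument (average over `H` shifts by multiples of `a`, apply Cauchy–Schwarz, expand the square)
shows that `z` also has mean zero along `a ℕ`.
-/

open Filter Finset Topology

def HasMean (f : ℕ → ℝ) (c : ℝ) : Prop :=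
  Tendsto (fun N : ℕ => (∑ n ∈ Icc 1 N, f n) / N) atTop (𝓝 c)

lemma sum_Icc_one_eq_sum_range (f : ℕ → ℝ) (N : ℕ) :
    ∑ n ∈ Icc 1 N, f n = ∑ n ∈ range N, f (n + 1) := by
  rw [range_eq_Ico, sum_Ico_add', ← Ico_add_one_right_eq_Icc, zero_add]

lemma abs_sum_le_card {f : ℕ → ℝ} (hf : ∀ n, |f n| ≤ 1) (s : Finset ℕ) :
    |∑ n ∈ s, f n| ≤ #s := by
  simpa using (abs_sum_le_sum_abs f s).trans (sum_le_sum fun n _ => hf n)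

lemma abs_sum_Icc_add_sub_sum_Icc_le {f : ℕ → ℝ} (hf : ∀ n, |f n| ≤ 1) (N t : ℕ) :
    |∑ n ∈ Icc 1 N, f (n + t) - ∑ n ∈ Icc 1 N, f n| ≤ 2 * t := by
  have hsplit := sum_range_add (fun n => f (n + 1)) t N
  rw [add_comm t N, sum_range_add] at hsplit
  have hshift : ∑ n ∈ Icc 1 N, f (n + t) - ∑ n ∈ Icc 1 N, f n
      = ∑ n ∈ range t, f (N + n + 1) - ∑ n ∈ range t, f (n + 1) := by
    simp only [sum_Icc_one_eq_sum_range, add_comm _ t, add_assoc] at hsplit ⊢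
    linarith
  rw [hshift]
  calc _ ≤ |∑ n ∈ range t, f (N + n + 1)| + |∑ n ∈ range t, f (n + 1)| := abs_sub _ _
    _ ≤ t + t := by
      gcongr <;> simpa using abs_sum_le_card (fun n => hf _) (range t)
    _ = 2 * t := by ring

lemma abs_mul_sum_sub_sum_sum_add_le {f : ℕ → ℝ} (hf : ∀ n, |f n| ≤ 1) (N H : ℕ) :
    |H * ∑ n ∈ Icc 1 N, f n - ∑ j ∈ range H, ∑ n ∈ Icc 1 N, f (n + j)| ≤ 2 * H ^ 2 := by
  rw [show (H : ℝ) * ∑ n ∈ Icc 1 N, f n = ∑ _j ∈ range H, ∑ n ∈ Icc 1 N, f n by simp,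
    ← sum_sub_distrib]
  calc _ ≤ ∑ j ∈ range H, |∑ n ∈ Icc 1 N, f n - ∑ n ∈ Icc 1 N, f (n + j)| :=
        abs_sum_le_sum_abs _ _
    _ ≤ ∑ _j ∈ range H, 2 * (H : ℝ) := by
        refine sum_le_sum fun j hj => ?_
        rw [abs_sub_comm]
        refine (abs_sum_Icc_add_sub_sum_Icc_le hf N j).trans ?_
        have : (j : ℝ) ≤ H := by exact_mod_cast (mem_range.1 hj).le
        linarith
    _ = 2 * H ^ 2 := by rw [sum_const, card_range, nsmul_eq_mul]; ring

namespace HasMean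

variable {f g : ℕ → ℝ} {c d : ℝ}

lemma add (hf : HasMean f c) (hg : HasMean g d) : HasMean (f + g) (c + d) := by
  simpa only [HasMean, Pi.add_apply, sum_add_distrib, add_div] using Tendsto.add hf hg

lemma sub (hf : HasMean f c) (hg : HasMean g d) : HasMean (f - g) (c - d) := by
  simpa only [HasMean, Pi.sub_apply, sum_sub_distrib, sub_div] using Tendsto.sub hf hg

lemma const_mul (hf : HasMean f c) (r : ℝ) : HasMean (fun n => r * f n) (r * c) := by
  simpa only [HasMean, ← mul_sum, mul_div_assoc] using Tendsto.const_mul r hf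

end HasMean

lemma hasMean_const (c : ℝ) : HasMean (fun _ => c) c := by
  refine tendsto_const_nhds.congr' ?_
  filter_upwards [eventually_gt_atTop 0] with N hN
  simp [hN.ne']

lemma hasDensity_iff_hasMean_indicator {E : Set ℕ} {d : ℝ} :
    HasDensity E d ↔ HasMean (E.indicator 1) d := by
  simp only [HasDensity, HasMean, natCast_card_filter, Set.indicator_apply, Pi.one_apply]

lemma HasMean.comp_add {f : ℕ → ℝ} {c : ℝ} (hf : ∀ n, |f n| ≤ 1) (h : HasMean f c) (t : ℕ) :
    HasMean (fun n => f (n + t)) c := by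
  refine h.congr_dist (squeeze_zero (fun _ => dist_nonneg) (fun N => ?_)
    (tendsto_const_div_atTop_nhds_zero_nat (2 * t : ℝ)))
  rw [Real.dist_eq, ← sub_div, abs_div, Nat.abs_cast, abs_sub_comm]
  exact div_le_div_of_nonneg_right (abs_sum_Icc_add_sub_sum_Icc_le hf N t) N.cast_nonneg

lemma HasMean.eventually_abs_sum_le {f : ℕ → ℝ} (h : HasMean f 0) {δ : ℝ} (hδ : 0 < δ) :
    ∀ᶠ N : ℕ in atTop, |∑ n ∈ Icc 1 N, f n| ≤ δ * N := by
  filter_upwards [Metric.tendsto_nhds.1 h δ hδ] with N hN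
  rw [Real.dist_0_eq_abs, abs_div, Nat.abs_cast] at hN
  rcases N.eq_zero_or_pos with rfl | hN0
  · simp
  · exact (div_lt_iff₀ (by exact_mod_cast hN0)).1 hN |>.le

section VanDerCorput

variable {z : ℕ → ℝ}

lemma sum_Icc_comp_mul_le {g : ℕ → ℝ} (hg : ∀ x, 0 ≤ g x) {a : ℕ} (ha : 0 < a) (N : ℕ) :
    ∑ n ∈ Icc 1 N, g (a * n) ≤ ∑ x ∈ Icc 1 (a * N), g x := by
  rw [← sum_image fun n _ n' _ h => Nat.eq_of_mul_eq_mul_left ha h]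
  refine sum_le_sum_of_subset_of_nonneg (fun x hx => ?_) fun x _ _ => hg x
  obtain ⟨n, hn, rfl⟩ := mem_image.1 hx
  rw [mem_Icc] at hn ⊢
  exact ⟨Nat.one_le_iff_ne_zero.2 (Nat.mul_ne_zero ha.ne' (by omega)),
    Nat.mul_le_mul_left a hn.2⟩

lemma sq_sum_sum_comp_mul_le {a : ℕ} (ha : 0 < a) (N H : ℕ) :
    (∑ n ∈ Icc 1 N, ∑ j ∈ range H, z (a * (n + j))) ^ 2
      ≤ N * ∑ x ∈ Icc 1 (a * N), (∑ j ∈ range H, z (x + a * j)) ^ 2 := by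
  refine (sq_sum_le_card_mul_sum_sq).trans ?_
  rw [Nat.card_Icc, Nat.add_sub_cancel]
  simp only [mul_add]
  exact mul_le_mul_of_nonneg_left
    (sum_Icc_comp_mul_le (g := fun x => (∑ j ∈ range H, z (x + a * j)) ^ 2)
      (fun _ => sq_nonneg _) ha N) N.cast_nonneg

lemma sum_mul_shift_le (hz : ∀ n, |z n| ≤ 1) (M a j j' : ℕ) :
    ∑ x ∈ Icc 1 M, z (x + a * j) * z (x + a * j')
      ≤ 2 * (a * min j j') + |∑ x ∈ Icc 1 M, z x * z (x + a * j.dist j')| := by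
  wlog hjj' : j ≤ j' generalizing j j'
  · simpa only [mul_comm (z (_ + a * j)), min_comm, Nat.dist_comm] using this j' j (by omega)
  obtain ⟨d, rfl⟩ := Nat.exists_eq_add_of_le hjj'
  have hg : ∀ x, |z x * z (x + a * d)| ≤ 1 := fun x => by
    rw [abs_mul]; exact mul_le_one₀ (hz x) (abs_nonneg _) (hz _)
  have hshift := abs_sum_Icc_add_sub_sum_Icc_le hg M (a * j)
  have hdist : j.dist (j + d) = d := by simp [Nat.dist]
  simp only [add_assoc, ← mul_add] at hshift
  rw [min_eq_left hjj', hdist]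
  push_cast at hshift
  linarith [le_abs_self (∑ x ∈ Icc 1 M, z (x + a * j) * z (x + a * (j + d))
    - ∑ x ∈ Icc 1 M, z x * z (x + a * d)), le_abs_self (∑ x ∈ Icc 1 M, z x * z (x + a * d))]

lemma card_filter_dist_lt_le (H j m : ℕ) : #{j' ∈ range H | j.dist j' < m} ≤ 2 * m := by
  calc #{j' ∈ range H | j.dist j' < m} ≤ #(Ico (j + 1 - m) (j + m)) :=
        card_le_card fun j' hj' => by
          have := (mem_filter.1 hj').2
          rw [Nat.dist] at this
          rw [mem_Ico]
          omega
    _ ≤ 2 * m := by simp only [Nat.card_Ico]; omega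

lemma sum_sq_sum_shift_le (hz : ∀ n, |z n| ≤ 1) {a m H N : ℕ} {δ : ℝ} (hδ : 0 ≤ δ)
    (hC : ∀ d ∈ Ico m H, |∑ x ∈ Icc 1 (a * N), z x * z (x + a * d)| ≤ δ * (a * N)) :
    ∑ x ∈ Icc 1 (a * N), (∑ j ∈ range H, z (x + a * j)) ^ 2
      ≤ H * (H * (2 * a * H + δ * (a * N)) + 2 * m * (a * N)) := by
  have hexpand : ∑ x ∈ Icc 1 (a * N), (∑ j ∈ range H, z (x + a * j)) ^ 2
      = ∑ j ∈ range H, ∑ j' ∈ range H, ∑ x ∈ Icc 1 (a * N), z (x + a * j) * z (x + a * j') := by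
    simp only [sq, sum_mul_sum]
    rw [sum_comm]
    exact sum_congr rfl fun j _ => sum_comm
  have hpair : ∀ j ∈ range H, ∀ j' ∈ range H,
      ∑ x ∈ Icc 1 (a * N), z (x + a * j) * z (x + a * j')
        ≤ 2 * a * H + δ * (a * N) + if j.dist j' < m then (a * N : ℝ) else 0 := by
    intro j hj j' hj'
    refine (sum_mul_shift_le hz _ a j j').trans ?_
    have hmin : ((min j j' : ℕ) : ℝ) ≤ H := by
      exact_mod_cast (min_le_left j j').trans (mem_range.1 hj).le
    have hδaN : 0 ≤ δ * (a * N) := by positivity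
    split_ifs with hlt
    · have htriv := abs_sum_le_card (f := fun x => z x * z (x + a * j.dist j'))
        (fun x => by rw [abs_mul]; exact mul_le_one₀ (hz x) (abs_nonneg _) (hz _)) (Icc 1 (a * N))
      rw [Nat.card_Icc, Nat.add_sub_cancel, Nat.cast_mul] at htriv
      nlinarith [Nat.cast_nonneg (α := ℝ) a]
    · have hdist : j.dist j' ∈ Ico m H := by
        have := mem_range.1 hj; have := mem_range.1 hj'
        rw [mem_Ico, Nat.dist] at *
        omega
      nlinarith [hC _ hdist, Nat.cast_nonneg (α := ℝ) a]
  rw [hexpand]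
  calc _ ≤ ∑ j ∈ range H, ∑ j' ∈ range H,
        (2 * a * H + δ * (a * N) + if j.dist j' < m then (a * N : ℝ) else 0) :=
        sum_le_sum fun j hj => sum_le_sum fun j' hj' => hpair j hj j' hj'
    _ ≤ ∑ _j ∈ range H, (H * (2 * a * H + δ * (a * N)) + 2 * m * (a * N)) := by
        refine sum_le_sum fun j _ => ?_
        rw [sum_add_distrib, sum_const, card_range, nsmul_eq_mul, ← sum_filter, sum_const,
          nsmul_eq_mul]
        have hcard : (#{j' ∈ range H | j.dist j' < m} : ℝ) ≤ 2 * m := by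
          exact_mod_cast card_filter_dist_lt_le H j m
        exact (add_le_add_iff_left _).2 (mul_le_mul_of_nonneg_right hcard (by positivity))
    _ = _ := by rw [sum_const, card_range, nsmul_eq_mul]

lemma sq_mean_comp_mul_le (hz : ∀ n, |z n| ≤ 1) {a m H N : ℕ} (ha : 0 < a) (hH : 0 < H)
    (hN : 0 < N) {δ : ℝ} (hδ : 0 ≤ δ)
    (hC : ∀ d ∈ Ico m H, |∑ x ∈ Icc 1 (a * N), z x * z (x + a * d)| ≤ δ * (a * N)) :
    ((∑ n ∈ Icc 1 N, z (a * n)) / N) ^ 2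
      ≤ (8 * H ^ 2 + 4 * a * H) / N + 2 * a * δ + 4 * a * m / H := by
  have hshift := abs_mul_sum_sub_sum_sum_add_le (f := fun n => z (a * n)) (fun n => hz _) N H
  have hCS := (sq_sum_sum_comp_mul_le ha N H).trans
    (mul_le_mul_of_nonneg_left (sum_sq_sum_shift_le hz hδ hC) N.cast_nonneg)
  rw [sum_comm] at hCS
  set T := ∑ n ∈ Icc 1 N, z (a * n)
  set G := ∑ j ∈ range H, ∑ n ∈ Icc 1 N, z (a * (n + j))
  have hHT : (H * T) ^ 2 ≤ 8 * H ^ 4 + 2 * G ^ 2 := by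
    nlinarith [sq_abs (H * T - G), abs_nonneg (H * T - G), sq_nonneg (H * T - 2 * G)]
  have hH' : (0 : ℝ) < H := by exact_mod_cast hH
  have hN' : (1 : ℝ) ≤ N := by exact_mod_cast hN
  rw [div_pow, div_le_iff₀ (by positivity)]
  refine le_of_mul_le_mul_left ?_ (by positivity : (0 : ℝ) < H ^ 2)
  have hexpand : (H : ℝ) ^ 2 * (((8 * H ^ 2 + 4 * a * H) / N + 2 * a * δ + 4 * a * m / H) * N ^ 2)
      = 8 * H ^ 4 * N + 4 * a * H ^ 3 * N + 2 * a * δ * H ^ 2 * N ^ 2 + 4 * a * m * H * N ^ 2 := by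
    field_simp
  rw [hexpand]
  nlinarith [pow_pos hH' 4]

theorem hasMean_comp_mul_of_hasMean_correlation (hz : ∀ n, |z n| ≤ 1)
    (hcorr : ∀ᶠ t in atTop, HasMean (fun n => z n * z (n + t)) 0) {a : ℕ} (ha : 0 < a) :
    HasMean (fun n => z (a * n)) 0 := by
  obtain ⟨m, hm⟩ := eventually_atTop.1 hcorr
  refine Metric.tendsto_nhds.2 fun ε hε => ?_
  -- `H`, `δ`, then `N` make the three error terms of `sq_mean_comp_mul_le` sum to less than `ε²`
  obtain ⟨H, hH⟩ := exists_nat_gt (12 * a * m / ε ^ 2)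
  have hH0 : 0 < H := by exact_mod_cast (by positivity : (0 : ℝ) ≤ 12 * a * m / ε ^ 2).trans_lt hH
  set δ := ε ^ 2 / (6 * a)
  have hC : ∀ᶠ N in atTop, ∀ d ∈ Ico m H,
      |∑ x ∈ Icc 1 (a * N), z x * z (x + a * d)| ≤ δ * (a * N) := by
    refine (eventually_all_finset _).2 fun d hd => ?_
    have hlag : m ≤ a * d := (mem_Ico.1 hd).1.trans (Nat.le_mul_of_pos_left d ha)
    filter_upwards [(tendsto_id.const_mul_atTop' ha).eventually
      ((hm _ hlag).eventually_abs_sum_le (by positivity : 0 < δ))] with N hN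
    simpa using hN
  have hsmall := (tendsto_order.1 (tendsto_const_div_atTop_nhds_zero_nat
    (8 * H ^ 2 + 4 * a * H : ℝ))).2 (ε ^ 2 / 3) (by positivity)
  filter_upwards [hC, hsmall, eventually_gt_atTop 0] with N hCN hsmallN hN
  have hmean := sq_mean_comp_mul_le hz ha hH0 hN (by positivity) hCN
  have hδ : 2 * a * δ = ε ^ 2 / 3 := by simp only [δ]; field_simp; ring
  have hHm : 4 * a * m / H < ε ^ 2 / 3 := by
    rw [div_lt_iff₀ (by exact_mod_cast hH0)]
    rw [div_lt_iff₀ (by positivity)] at hH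
    linarith
  rw [Real.dist_0_eq_abs]
  exact abs_lt_of_sq_lt_sq (by linarith) hε.le

end VanDerCorput

namespace HasDensity

variable {E F : Set ℕ} {d e : ℝ}

lemma mem_Icc (h : HasDensity E d) : d ∈ Set.Icc 0 1 := by
  refine ⟨ge_of_tendsto' h fun N => by positivity, le_of_tendsto' h fun N => ?_⟩
  refine div_le_one_of_le₀ ?_ N.cast_nonneg
  exact_mod_cast (card_filter_le _ _).trans (by simp)

lemma union (hE : HasDensity E d) (hF : HasDensity F e) (hEF : Disjoint E F) :
    HasDensity (E ∪ F) (d + e) := by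
  rw [hasDensity_iff_hasMean_indicator] at *
  rw [Set.indicator_union_of_disjoint hEF]
  exact hE.add hF

theorem preimage_mul (hE : HasDensity E d)
    (hcorr : ∀ᶠ t in atTop, HasDensity (E ∩ (· + t) ⁻¹' E) (d ^ 2)) {a : ℕ} (ha : 0 < a) :
    HasDensity ((a * ·) ⁻¹' E) d := by
  obtain ⟨hd0, hd1⟩ := hE.mem_Icc
  rw [hasDensity_iff_hasMean_indicator] at hE ⊢
  have hind : ∀ n, |E.indicator 1 n| ≤ (1 : ℝ) := fun n => by
    by_cases hn : n ∈ E <;> simp [hn]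
  set z : ℕ → ℝ := fun n => E.indicator 1 n - d
  have hz : ∀ n, |z n| ≤ 1 := fun n => by
    rw [abs_le]
    by_cases hn : n ∈ E <;> simp only [z, hn, Set.indicator_of_mem, Set.indicator_of_notMem,
      Pi.one_apply, not_false_eq_true] <;> constructor <;> linarith
  have hzcorr : ∀ᶠ t in atTop, HasMean (fun n => z n * z (n + t)) 0 := by
    filter_upwards [hcorr] with t ht
    rw [hasDensity_iff_hasMean_indicator] at ht
    have := ((ht.sub ((hE.comp_add hind t).const_mul d)).sub (hE.const_mul d)).add
      (hasMean_const (d ^ 2))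
    convert this using 1
    · ext n
      by_cases h₁ : n ∈ E <;> by_cases h₂ : n + t ∈ E <;> simp [z, h₁, h₂] <;> ring
    · ring
  convert (hasMean_comp_mul_of_hasMean_correlation hz hzcorr ha).add (hasMean_const d) using 1
  · ext n
    by_cases hn : a * n ∈ E <;> simp [z, hn]
  · ring

end HasDensity

section Occurrences

/-- A pattern on the window `S` is encoded by the set `P` of positions carrying a `1`;
only `P ∩ S` matters. -/
def occurrences (A : Set ℕ) (S : Finset ℕ) (P : Set ℕ) : Set ℕ :=
  {n | ∀ i ∈ S, (n + i ∈ A ↔ i ∈ P)}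

variable {A : Set ℕ}

lemma occurrences_eq_union {S : Finset ℕ} {j : ℕ} (hj : j ∉ S) (P : Set ℕ) :
    occurrences A S P
      = occurrences A (insert j S) (insert j P) ∪ occurrences A (insert j S) (P \ {j}) := by
  ext n
  have hne : ∀ i ∈ S, i ≠ j := fun i hi h => hj (h ▸ hi)
  simp only [occurrences, Set.mem_union, Set.mem_ofPred_eq, forall_mem_insert]
  constructor
  · intro h
    by_cases hnj : n + j ∈ A
    · exact .inl ⟨by simpa using hnj, fun i hi => by simpa [hne i hi] using h i hi⟩
    · exact .inr ⟨by simpa using hnj, fun i hi => by simpa [hne i hi] using h i hi⟩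
  · rintro (⟨-, h⟩ | ⟨-, h⟩) i hi <;> simpa [hne i hi] using h i hi

lemma disjoint_occurrences_insert (S : Finset ℕ) (j : ℕ) (P : Set ℕ) :
    Disjoint (occurrences A (insert j S) (insert j P)) (occurrences A (insert j S) (P \ {j})) :=
  Set.disjoint_left.2 fun n h₁ h₂ => by
    simpa using (h₂ j (mem_insert_self j S)).1
      ((h₁ j (mem_insert_self j S)).2 (Set.mem_insert j P))

lemma IsNormalSet.hasDensity_occurrences_range (hA : IsNormalSet A) {L : ℕ} (hL : 0 < L)
    (P : Set ℕ) : HasDensity (occurrences A (range L) P) (1 / 2 ^ L) := by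
  set w := List.ofFn fun i : Fin L => decide ((i : ℕ) ∈ P)
  have hlen : w.length = L := List.length_ofFn
  have hocc : ∀ n, (∀ i : Fin w.length, (n + (i : ℕ) ∈ A ↔ w.get i = true))
      ↔ n ∈ occurrences A (range L) P := by
    intro n
    simp [w, occurrences, Fin.forall_iff]
  have := hA w (by simpa [← List.length_pos_iff, hlen] using hL)
  simp_rw [hocc, hlen] at this
  exact this

theorem IsNormalSet.hasDensity_occurrences (hA : IsNormalSet A) (S : Finset ℕ) (P : Set ℕ) :
    HasDensity (occurrences A S P) (1 / 2 ^ #S) := by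
  obtain ⟨L, hL⟩ := exists_nat_subset_range S
  suffices ∀ k, ∀ S ⊆ range (L + 1), #(range (L + 1) \ S) = k →
      ∀ P, HasDensity (occurrences A S P) (1 / 2 ^ #S) from
    this _ S (hL.trans (range_subset_range.2 L.le_succ)) rfl P
  intro k
  induction k with
  | zero =>
    intro S hS hk P
    obtain rfl : S = range (L + 1) :=
      (Finset.sdiff_eq_empty_iff_subset.1 (card_eq_zero.1 hk)).antisymm' hS
    simpa using hA.hasDensity_occurrences_range L.succ_pos P
  | succ k ih =>
    intro S hS hk P
    obtain ⟨j, hj⟩ : (range (L + 1) \ S).Nonempty := card_pos.1 (by omega)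
    obtain ⟨hjL, hjS⟩ := mem_sdiff.1 hj
    have hk' : #(range (L + 1) \ insert j S) = k := by
      rw [sdiff_insert, card_erase_of_mem hj, hk, Nat.add_sub_cancel]
    have h₁ := ih _ (insert_subset hjL hS) hk' (insert j P)
    have h₂ := ih _ (insert_subset hjL hS) hk' (P \ {j})
    rw [occurrences_eq_union hjS]
    convert h₁.union h₂ (disjoint_occurrences_insert S j P) using 1
    rw [card_insert_of_notMem hjS]
    ring

lemma occurrences_inter_preimage_add {S : Finset ℕ} {t : ℕ} (hS : ∀ i ∈ S, i < t) (P : Set ℕ) :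
    occurrences A S P ∩ (· + t) ⁻¹' occurrences A S P
      = occurrences A (S ∪ S.image (· + t)) {i | if i < t then i ∈ P else i - t ∈ P} := by
  ext n
  simp only [occurrences, Set.mem_inter_iff, Set.mem_preimage, Set.mem_ofPred_eq,
    forall_mem_union, forall_mem_image]
  refine and_congr (forall₂_congr fun i hi => ?_) (forall₂_congr fun i _ => ?_)
  · simp [hS i hi]
  · simp [add_assoc, add_comm t i]

lemma card_union_image_add {S : Finset ℕ} {t : ℕ} (hS : ∀ i ∈ S, i < t) :
    #(S ∪ S.image (· + t)) = 2 * #S := by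
  rw [card_union_of_disjoint, card_image_of_injective _ (add_left_injective t), two_mul]
  refine disjoint_left.2 fun i hi hi' => ?_
  obtain ⟨j, -, rfl⟩ := mem_image.1 hi'
  exact absurd (hS _ hi) (by omega)

theorem IsNormalSet.eventually_hasDensity_occurrences_inter_preimage_add (hA : IsNormalSet A)
    (S : Finset ℕ) (P : Set ℕ) :
    ∀ᶠ t in atTop, HasDensity (occurrences A S P ∩ (· + t) ⁻¹' occurrences A S P)
      ((1 / 2 ^ #S) ^ 2) := by
  filter_upwards [(eventually_all_finset S).2 fun i _ => eventually_gt_atTop i] with t ht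
  rw [occurrences_inter_preimage_add ht]
  convert hA.hasDensity_occurrences _ _ using 1
  rw [card_union_image_add ht]
  ring

end Occurrences

theorem isNormalSet_dilate (A : Set ℕ) (hA : IsNormalSet A) (a : ℕ) (ha : 0 < a) :
    IsNormalSet {n : ℕ | a * n ∈ A} := by
  intro w hw
  set S := (range w.length).image (a * ·)
  set P : Set ℕ := {i | w.getD (i / a) false = true}
  have hS : #S = w.length := by
    rw [card_image_of_injective _ (mul_right_injective₀ ha.ne'), card_range]
  have h := (hA.hasDensity_occurrences S P).preimage_mul
    (hA.eventually_hasDensity_occurrences_inter_preimage_add S P) ha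
  have hocc : ∀ n, (∀ i : Fin w.length, (n + (i : ℕ) ∈ {n : ℕ | a * n ∈ A} ↔ w.get i = true))
      ↔ n ∈ (a * ·) ⁻¹' occurrences A S P := by
    intro n
    simp only [S, P, occurrences, Set.mem_preimage, Set.mem_ofPred_eq, forall_mem_image, mem_range,
      Fin.forall_iff, mul_add, Nat.mul_div_cancel_left _ ha]
    exact forall₂_congr fun i hi => by rw [List.getD_eq_getElem _ _ hi]; rfl
  rw [hS] at h
  simp_rw [hocc]
  exact h
end

section
/- If A ⊆ ℕ is a normal set and a ∈ ℕ is positive, then the set A_a = {n : a·n ∈ A} has natural density 1/2. -/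
open scoped Classical

/-!
Write `B = {m | a * m ∈ A}`. Sliding a window of length `K` along `[1, N]` counts every element
of `B ∩ [1, N]` exactly `K` times up to `K²` boundary terms, and the window at `j` sees the ones
of the pattern of `A` of length `aK` read at `aj`, on the positions `0, a, …, a(K-1)`.
On the hypercube of all such patterns, the number of ones on `K` fixed positions minus `K/2` has
second moment `K/4`, hence mean absolute value at most `√K/2`. Normality says nothing directly
about the patterns read at multiples of `a`, but it makes the patterns read at `n = 1, …, aN`
asymptotically uniform; as the deviation is nonnegative, keeping only `n = aj` costs at most a
factor `a`. Hence `|#(B ∩ [1, N]) / N - 1/2| ≤ a / (2√K) + o(1)` for every `K`.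
-/

open Finset Filter Topology

section Hypercube

variable {ι : Type*} [DecidableEq ι]

theorem two_mul_card_inter_sub_card (T S : Finset ι) :
    2 * (#(T ∩ S) : ℝ) - #T = ∑ i ∈ T, if i ∈ S then (1 : ℝ) else -1 := by
  rw [sum_ite, sum_const, sum_const, ← card_filter_add_card_filter_not (s := T) (· ∈ S),
    filter_mem_eq_inter]
  simp only [nsmul_eq_mul]
  push_cast
  ring

variable [Fintype ι]

theorem sum_sign_mul_sign (i j : ι) :
    ∑ S : Finset ι, (if i ∈ S then (1 : ℝ) else -1) * (if j ∈ S then 1 else -1) =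
      if i = j then 2 ^ Fintype.card ι else 0 := by
  set F : Finset ι → ℝ := fun S => (if i ∈ S then 1 else -1) * (if j ∈ S then 1 else -1)
  split_ifs with hij
  · subst hij
    simp [F, apply_ite (fun x : ℝ => x * x), Fintype.card_finset]
  · -- toggling `i` flips the sign of every term
    have hσ : Function.Involutive fun S : Finset ι => symmDiff S {i} := fun S =>
      symmDiff_symmDiff_cancel_right _ _
    have hflip : ∀ S, F (symmDiff S {i}) = -F S := fun S => by
      by_cases hi : i ∈ S <;> by_cases hj : j ∈ S <;> simp [F, mem_symmDiff, hi, hj, Ne.symm hij]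
    have := Equiv.sum_comp (hσ.toPerm _) F
    simp only [Function.Involutive.coe_toPerm, hflip, sum_neg_distrib] at this
    linarith

theorem sum_sq_card_inter_sub_half (T : Finset ι) :
    ∑ S : Finset ι, ((#(T ∩ S) : ℝ) - #T / 2) ^ 2 = (2 : ℝ) ^ Fintype.card ι * #T / 4 := by
  have hsq : ∀ S : Finset ι, ((#(T ∩ S) : ℝ) - #T / 2) ^ 2 = (∑ i ∈ T, ∑ j ∈ T,
      (if i ∈ S then (1 : ℝ) else -1) * (if j ∈ S then 1 else -1)) / 4 := fun S => by
    rw [← sum_mul_sum, ← sq, ← two_mul_card_inter_sub_card]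
    ring
  simp only [hsq, ← sum_div]
  rw [sum_comm]
  simp only [sum_comm (γ := Finset ι), sum_sign_mul_sign, sum_ite_eq]
  rw [sum_ite_mem, inter_self, sum_const, nsmul_eq_mul]
  ring

theorem sum_abs_card_inter_sub_half_le (T : Finset ι) :
    ∑ S : Finset ι, |(#(T ∩ S) : ℝ) - #T / 2| ≤ 2 ^ Fintype.card ι * √(#T : ℝ) / 2 := by
  have hcs := sq_sum_le_card_mul_sum_sq (s := (univ : Finset (Finset ι)))
    (f := fun S => |(#(T ∩ S) : ℝ) - #T / 2|)
  simp only [sq_abs, sum_sq_card_inter_sub_half, card_univ, Fintype.card_finset] at hcs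
  refine (pow_le_pow_iff_left₀ (sum_nonneg fun _ _ => abs_nonneg _) (by positivity)
    two_ne_zero).1 (hcs.trans_eq ?_)
  rw [div_pow, mul_pow, Real.sq_sqrt (Nat.cast_nonneg _)]
  push_cast
  ring

end Hypercube

section Pattern

noncomputable def pattern (A : Set ℕ) (L n : ℕ) : Finset (Fin L) := {i | n + (i : ℕ) ∈ A}

variable {A : Set ℕ} {L : ℕ}

theorem IsNormalSet.tendsto_card_pattern_eq (hA : IsNormalSet A) (hL : L ≠ 0)
    (S : Finset (Fin L)) :
    Tendsto (fun N : ℕ => (#{n ∈ Icc 1 N | pattern A L n = S} : ℝ) / N) atTop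
      (𝓝 (1 / 2 ^ L)) := by
  convert hA (List.ofFn fun i : Fin L => decide (i ∈ S)) (by simpa using hL) using 6 <;>
    simp [pattern, Finset.ext_iff, Fin.forall_iff]

theorem IsNormalSet.tendsto_sum_pattern_div (hA : IsNormalSet A) (hL : L ≠ 0)
    (g : Finset (Fin L) → ℝ) :
    Tendsto (fun N : ℕ => (∑ n ∈ Icc 1 N, g (pattern A L n)) / N) atTop
      (𝓝 ((∑ S, g S) / 2 ^ L)) := by
  have hsplit : ∀ N : ℕ, (∑ n ∈ Icc 1 N, g (pattern A L n)) / N =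
      ∑ S, (#{n ∈ Icc 1 N | pattern A L n = S} : ℝ) / N * g S := fun N => by
    rw [← sum_fiberwise' (Icc 1 N) (pattern A L) g, sum_div]
    simp only [sum_const, nsmul_eq_mul]
    exact sum_congr rfl fun _ _ => by ring
  simp only [hsplit, sum_div]
  refine tendsto_finsetSum _ fun S _ => ?_
  convert (hA.tendsto_card_pattern_eq hL S).mul_const (g S) using 2
  ring

end Pattern

theorem card_filter_add_mem_le (B : Set ℕ) (N k : ℕ) :
    #{j ∈ Icc 1 N | j + k ∈ B} ≤ #{j ∈ Icc 1 N | j ∈ B} + k := by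
  calc #{j ∈ Icc 1 N | j + k ∈ B}
      = #({j ∈ Icc 1 N | j + k ∈ B}.map (addRightEmbedding k)) := (card_map _).symm
    _ ≤ #({j ∈ Icc 1 N | j ∈ B} ∪ Icc (N + 1) (N + k)) := by
        refine card_le_card fun m hm => ?_
        simp only [Finset.mem_map, mem_filter, mem_Icc, addRightEmbedding_apply] at hm
        obtain ⟨j, ⟨⟨hj1, hjN⟩, hjB⟩, rfl⟩ := hm
        by_cases hjk : j + k ≤ N
        · exact mem_union_left _ (mem_filter.2 ⟨mem_Icc.2 ⟨by omega, hjk⟩, hjB⟩)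
        · exact mem_union_right _ (mem_Icc.2 ⟨by omega, by omega⟩)
    _ ≤ #{j ∈ Icc 1 N | j ∈ B} + k := by
        simpa using card_union_le {j ∈ Icc 1 N | j ∈ B} (Icc (N + 1) (N + k))

theorem card_filter_mem_le_add (B : Set ℕ) (N k : ℕ) :
    #{j ∈ Icc 1 N | j ∈ B} ≤ #{j ∈ Icc 1 N | j + k ∈ B} + k := by
  calc #{j ∈ Icc 1 N | j ∈ B}
      ≤ #({j ∈ Icc 1 N | j + k ∈ B}.map (addRightEmbedding k) ∪ Icc 1 k) := by
        refine card_le_card fun m hm => ?_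
        simp only [mem_filter, mem_Icc] at hm
        by_cases hmk : m ≤ k
        · exact mem_union_right _ (mem_Icc.2 ⟨hm.1.1, hmk⟩)
        · refine mem_union_left _ (Finset.mem_map.2 ⟨m - k, ?_, by rw [addRightEmbedding_apply]; omega⟩)
          rw [mem_filter, Nat.sub_add_cancel (by omega)]
          exact ⟨mem_Icc.2 ⟨by omega, by omega⟩, hm.2⟩
    _ ≤ #{j ∈ Icc 1 N | j + k ∈ B} + k := by
        simpa using card_union_le ({j ∈ Icc 1 N | j + k ∈ B}.map (addRightEmbedding k)) (Icc 1 k)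

theorem abs_card_filter_add_mem_sub_le (B : Set ℕ) (N k : ℕ) :
    |(#{j ∈ Icc 1 N | j + k ∈ B} : ℝ) - #{j ∈ Icc 1 N | j ∈ B}| ≤ k := by
  have h₁ : (#{j ∈ Icc 1 N | j + k ∈ B} : ℝ) ≤ #{j ∈ Icc 1 N | j ∈ B} + k := by
    exact_mod_cast card_filter_add_mem_le B N k
  have h₂ : (#{j ∈ Icc 1 N | j ∈ B} : ℝ) ≤ #{j ∈ Icc 1 N | j + k ∈ B} + k := by
    exact_mod_cast card_filter_mem_le_add B N k
  rw [abs_sub_le_iff]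
  constructor <;> linarith

theorem abs_sum_card_window_sub_le (B : Set ℕ) (N K : ℕ) :
    |∑ j ∈ Icc 1 N, (#{k : Fin K | j + (k : ℕ) ∈ B} : ℝ) - K * #{j ∈ Icc 1 N | j ∈ B}| ≤ K ^ 2 := by
  have hswap : ∑ j ∈ Icc 1 N, (#{k : Fin K | j + (k : ℕ) ∈ B} : ℝ) =
      ∑ k : Fin K, (#{j ∈ Icc 1 N | j + (k : ℕ) ∈ B} : ℝ) := by
    simp only [card_filter, Nat.cast_sum]
    exact sum_comm
  have hconst : (K : ℝ) * #{j ∈ Icc 1 N | j ∈ B} = ∑ _k : Fin K, (#{j ∈ Icc 1 N | j ∈ B} : ℝ) := by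
    simp
  calc _ = |∑ k : Fin K, ((#{j ∈ Icc 1 N | j + (k : ℕ) ∈ B} : ℝ) - #{j ∈ Icc 1 N | j ∈ B})| := by
        rw [hswap, hconst, sum_sub_distrib]
    _ ≤ ∑ k : Fin K, |(#{j ∈ Icc 1 N | j + (k : ℕ) ∈ B} : ℝ) - #{j ∈ Icc 1 N | j ∈ B}| :=
        abs_sum_le_sum_abs _ _
    _ ≤ ∑ _k : Fin K, (K : ℝ) := sum_le_sum fun k _ =>
        (abs_card_filter_add_mem_sub_le B N k).trans (Nat.cast_le.2 k.2.le)
    _ = K ^ 2 := by simp [sq]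

theorem sum_Icc_mul_le_sum_Icc {f : ℕ → ℝ} (hf : ∀ n, 0 ≤ f n) {a : ℕ} (ha : 0 < a) (N : ℕ) :
    ∑ j ∈ Icc 1 N, f (a * j) ≤ ∑ n ∈ Icc 1 (a * N), f n := by
  rw [← sum_image (f := f) fun _ _ _ _ h => Nat.eq_of_mul_eq_mul_left ha h]
  refine sum_le_sum_of_subset_of_nonneg (fun n hn => ?_) fun n _ _ => hf n
  obtain ⟨j, hj, rfl⟩ := mem_image.1 hn
  rw [mem_Icc] at hj ⊢
  constructor <;> nlinarith

def multiplesEmbedding {a : ℕ} (ha : 0 < a) (K : ℕ) : Fin K ↪ Fin (a * K) where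
  toFun k := ⟨a * k, Nat.mul_lt_mul_of_pos_left k.2 ha⟩
  inj' _ _ h := Fin.ext (Nat.eq_of_mul_eq_mul_left ha (congrArg Fin.val h))

theorem card_map_univ_inter {κ ι : Type*} [Fintype κ] [DecidableEq ι] (e : κ ↪ ι)
    (S : Finset ι) : #((univ : Finset κ).map e ∩ S) = #{k | e k ∈ S} := by
  rw [← filter_mem_eq_inter, filter_map, card_map]
  rfl

theorem card_multiples_inter_pattern (A : Set ℕ) {a : ℕ} (ha : 0 < a) (K j : ℕ) :
    #((univ : Finset (Fin K)).map (multiplesEmbedding ha K) ∩ pattern A (a * K) (a * j)) =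
      #{k : Fin K | j + (k : ℕ) ∈ {m | a * m ∈ A}} := by
  rw [card_map_univ_inter]
  simp only [pattern, mem_filter, mem_univ, true_and, Set.mem_ofPred_eq, mul_add]
  rfl

theorem abs_card_dilate_div_sub_half_le (A : Set ℕ) {a K N : ℕ} (ha : 0 < a) (hK : 0 < K)
    (hN : 0 < N) :
    |(#{j ∈ Icc 1 N | a * j ∈ A} : ℝ) / N - 1 / 2| ≤ K / N + a / K *
      ((∑ n ∈ Icc 1 (a * N), |(#((univ : Finset (Fin K)).map (multiplesEmbedding ha K) ∩
        pattern A (a * K) n) : ℝ) - K / 2|) / (a * N : ℕ)) := by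
  set T := (univ : Finset (Fin K)).map (multiplesEmbedding ha K)
  set D : Finset (Fin (a * K)) → ℝ := fun S => |(#(T ∩ S) : ℝ) - K / 2|
  set c : ℝ := (#{j ∈ Icc 1 N | a * j ∈ A} : ℝ)
  have hwindow := abs_sum_card_window_sub_le {m | a * m ∈ A} N K
  simp only [← card_multiples_inter_pattern A ha] at hwindow
  have hsub := sum_Icc_mul_le_sum_Icc (f := fun n => D (pattern A (a * K) n))
    (fun _ => abs_nonneg _) ha N
  have hmain : |K * c - N * (K / 2)| ≤ K ^ 2 + ∑ n ∈ Icc 1 (a * N), D (pattern A (a * K) n) := by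
    have hsplit : (K : ℝ) * c - N * (K / 2) =
        -(∑ j ∈ Icc 1 N, (#(T ∩ pattern A (a * K) (a * j)) : ℝ) - K * c) +
          ∑ j ∈ Icc 1 N, ((#(T ∩ pattern A (a * K) (a * j)) : ℝ) - K / 2) := by
      rw [sum_sub_distrib, sum_const, Nat.card_Icc, nsmul_eq_mul]
      simp
    rw [hsplit]
    refine (abs_add_le _ _).trans (add_le_add (by rwa [abs_neg]) ?_)
    exact (abs_sum_le_sum_abs _ _).trans hsub
  have hKN : (0 : ℝ) < K * N := by positivity
  calc |c / N - 1 / 2| = |K * c - N * (K / 2)| / (K * N) := by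
        rw [← abs_of_pos hKN, ← abs_div]
        congr 1
        field_simp
    _ ≤ (K ^ 2 + ∑ n ∈ Icc 1 (a * N), D (pattern A (a * K) n)) / (K * N) := by gcongr
    _ = K / N + a / K * ((∑ n ∈ Icc 1 (a * N), D (pattern A (a * K) n)) / (a * N : ℕ)) := by
        generalize ∑ n ∈ Icc 1 (a * N), D (pattern A (a * K) n) = s
        push_cast
        field_simp

theorem IsNormalSet.eventually_abs_card_dilate_div_sub_half_lt {A : Set ℕ} (hA : IsNormalSet A)
    {a K : ℕ} (ha : 0 < a) (hK : 0 < K) :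
    ∀ᶠ N in atTop, |(#{j ∈ Icc 1 N | a * j ∈ A} : ℝ) / N - 1 / 2| < a / √K := by
  set T := (univ : Finset (Fin K)).map (multiplesEmbedding ha K)
  set D : Finset (Fin (a * K)) → ℝ := fun S => |(#(T ∩ S) : ℝ) - K / 2|
  have hlim : Tendsto (fun N : ℕ => K / N + a / K *
      ((∑ n ∈ Icc 1 (a * N), D (pattern A (a * K) n)) / (a * N : ℕ))) atTop
      (𝓝 (0 + a / K * ((∑ S, D S) / 2 ^ (a * K)))) :=
    (tendsto_const_div_atTop_nhds_zero_nat _).add (((hA.tendsto_sum_pattern_div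
      (by positivity) D).comp (tendsto_id.const_mul_atTop' ha)).const_mul _)
  have hdefect : ∑ S, D S ≤ 2 ^ (a * K) * √K / 2 := by
    simpa [T] using sum_abs_card_inter_sub_half_le T
  have hsqrt : 0 < √(K : ℝ) := by positivity
  have hlt : 0 + a / K * ((∑ S, D S) / 2 ^ (a * K)) < a / √K := by
    calc _ ≤ (a : ℝ) / K * (√K / 2) := by
          rw [zero_add]
          refine mul_le_mul_of_nonneg_left ?_ (by positivity)
          rw [div_le_iff₀ (by positivity)]
          linarith
      _ = a / (2 * √K) := by
          field_simp
          exact Real.sq_sqrt (Nat.cast_nonneg _)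
      _ < a / √K := by gcongr; linarith
  filter_upwards [hlim.eventually (gt_mem_nhds hlt), eventually_gt_atTop 0] with N hN hN0
  exact (abs_card_dilate_div_sub_half_le A ha hK hN0).trans_lt hN

theorem dilate_density_half (A : Set ℕ) (hA : IsNormalSet A) (a : ℕ) (ha : 0 < a) :
    HasDensity {n : ℕ | a * n ∈ A} (1 / 2) := by
  refine Metric.tendsto_atTop.2 fun ε hε => ?_
  have hsmall : Tendsto (fun K : ℕ => (a : ℝ) / √K) atTop (𝓝 0) :=
    tendsto_const_nhds.div_atTop (Real.tendsto_sqrt_atTop.comp tendsto_natCast_atTop_atTop)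
  obtain ⟨K, hKε, hK⟩ := ((hsmall.eventually (gt_mem_nhds hε)).and (eventually_gt_atTop 0)).exists
  obtain ⟨N₀, hN₀⟩ := eventually_atTop.1 (hA.eventually_abs_card_dilate_div_sub_half_lt ha hK)
  exact ⟨N₀, fun N hN => (Real.dist_eq _ _).trans_lt ((hN₀ N hN).trans hKε)⟩
end

section
/- Every normal set A ⊆ ℕ contains elements x, y, z with x ≠ y such that x·y = z². -/
open scoped Classical

/-!
Let `χ = ±1` be the signed indicator of `A`. Normality makes every autocorrelation
`(1/N) ∑_{j ≤ N} χ j * χ (j + t)`, `t ≥ 1`, tend to `0`: flipping the first letter of a word of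
length `t + 1` negates `χ j * χ (j + t)`, so these products average to zero over all words.
By a van der Corput argument (Cauchy–Schwarz on the block sums `∑_{k ≤ K} χ (j + q k)`), a
bounded sequence with vanishing autocorrelations averages to `0` along every progression `q ℕ`;
hence every dilation `{m | 2 ^ n * m ∈ A}` has density `1/2`. Averaging over `n < c` yields
`m ≥ 1` with `2 ^ n * m ∈ A` for at least `c / 3` of the `n < c`, and for large `c` Roth's
theorem gives a nontrivial progression `a, b, e` among these `n`. Then `x = 2 ^ a * m`,
`y = 2 ^ e * m`, `z = 2 ^ b * m` satisfy `x * y = z ^ 2`.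
-/

open Filter Finset Topology

theorem abs_sum_le_card_s13 {ι : Type*} (s : Finset ι) {g : ι → ℝ} (hg : ∀ i ∈ s, |g i| ≤ 1) :
    |∑ i ∈ s, g i| ≤ #s :=
  (abs_sum_le_sum_abs _ _).trans (by simpa using sum_le_card_nsmul s _ 1 hg)

section VanDerCorput

variable {f : ℕ → ℝ}

theorem abs_sum_Icc_comp_add_sub_le (hf : ∀ j, |f j| ≤ 1) (M k : ℕ) :
    |∑ m ∈ Icc 1 M, f (m + k) - ∑ m ∈ Icc 1 M, f m| ≤ 2 * k := by
  have hIcc : ∀ g : ℕ → ℝ, ∑ m ∈ Icc 1 M, g m = ∑ m ∈ range M, g (1 + m) := fun g => by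
    rw [← Ico_add_one_right_eq_Icc, sum_Ico_eq_sum_range, Nat.add_sub_cancel]
  have htelescope : ∑ m ∈ range M, f (1 + m + k) - ∑ m ∈ range M, f (1 + m)
      = ∑ i ∈ range k, f (1 + M + i) - ∑ i ∈ range k, f (1 + i) := by
    have h₁ := sum_range_add (fun m => f (1 + m)) M k
    have h₂ := sum_range_add (fun m => f (1 + m)) k M
    have h₃ : ∑ m ∈ range M, f (1 + k + m) = ∑ m ∈ range M, f (1 + m + k) :=
      sum_congr rfl fun m _ => by rw [add_right_comm]
    simp only [add_comm k M, ← add_assoc] at h₁ h₂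
    linarith
  rw [hIcc, hIcc f, htelescope]
  calc _ ≤ |∑ i ∈ range k, f (1 + M + i)| + |∑ i ∈ range k, f (1 + i)| := abs_sub _ _
    _ ≤ k + k := by
      gcongr <;> simpa using abs_sum_le_card_s13 (range k) fun i _ => hf _
    _ = 2 * k := by ring

def autocorrelation (f : ℕ → ℝ) (t N : ℕ) : ℝ := ∑ j ∈ Icc 1 N, f j * f (j + t)

theorem abs_sum_mul_shift_le (hf : ∀ j, |f j| ≤ 1) (N a d : ℕ) :
    |∑ j ∈ Icc 1 N, f (j + a) * f (j + a + d)| ≤ |autocorrelation f d N| + 2 * a := by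
  have hshift := abs_sum_Icc_comp_add_sub_le (f := fun j => f j * f (j + d))
    (fun j => by rw [abs_mul]; exact mul_le_one₀ (hf j) (abs_nonneg _) (hf _)) N a
  have := abs_sub_abs_le_abs_sub (∑ j ∈ Icc 1 N, f (j + a) * f (j + a + d))
    (autocorrelation f d N)
  rw [autocorrelation] at this ⊢
  linarith

theorem abs_sum_mul_le_of_mem_Icc (hf : ∀ j, |f j| ≤ 1) (q N : ℕ) {K k k' : ℕ}
    (hk : k ∈ Icc 1 K) (hk' : k' ∈ Icc 1 K) :
    |∑ j ∈ Icc 1 N, f (j + q * k) * f (j + q * k')|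
      ≤ (if k = k' then (N : ℝ) else 0)
        + (∑ d ∈ Icc 1 K, |autocorrelation f (q * d) N| + 2 * q * K) := by
  wlog hkk' : k ≤ k' generalizing k k'
  · simpa only [mul_comm, eq_comm] using this hk' hk (le_of_not_ge hkk')
  have hT : 0 ≤ ∑ d ∈ Icc 1 K, |autocorrelation f (q * d) N| :=
    sum_nonneg fun _ _ => abs_nonneg _
  have hK : 0 ≤ 2 * (q : ℝ) * K := by positivity
  rw [mem_Icc] at hk hk'
  rcases hkk'.eq_or_lt with rfl | hlt
  · have := abs_sum_le_card_s13 (Icc 1 N) (g := fun j => f (j + q * k) * f (j + q * k))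
      fun j _ => by rw [abs_mul]; exact mul_le_one₀ (hf _) (abs_nonneg _) (hf _)
    simp only [Nat.card_Icc, add_tsub_cancel_right, if_true] at this ⊢
    linarith
  obtain ⟨d, rfl⟩ := Nat.exists_eq_add_of_le hkk'
  have hd : d ∈ Icc 1 K := mem_Icc.2 ⟨by omega, by omega⟩
  have hpair := abs_sum_mul_shift_le hf N (q * k) (q * d)
  have hsingle := single_le_sum (f := fun d => |autocorrelation f (q * d) N|)
    (fun _ _ => abs_nonneg _) hd
  have hqk : (q : ℝ) * k ≤ q * K := by gcongr; exact_mod_cast hk.2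
  simp only [mul_add, ← add_assoc, if_neg hlt.ne, Nat.cast_mul] at hpair hsingle ⊢
  linarith

theorem sum_sq_sum_Icc_comp_add_mul_le (hf : ∀ j, |f j| ≤ 1) (q K N : ℕ) :
    ∑ j ∈ Icc 1 N, (∑ k ∈ Icc 1 K, f (j + q * k)) ^ 2
      ≤ K * N + K ^ 2 * (∑ d ∈ Icc 1 K, |autocorrelation f (q * d) N| + 2 * q * K) := by
  set B := ∑ d ∈ Icc 1 K, |autocorrelation f (q * d) N| + 2 * q * K
  calc ∑ j ∈ Icc 1 N, (∑ k ∈ Icc 1 K, f (j + q * k)) ^ 2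
      = ∑ k ∈ Icc 1 K, ∑ k' ∈ Icc 1 K, ∑ j ∈ Icc 1 N, f (j + q * k) * f (j + q * k') := by
        simp_rw [sq, sum_mul_sum]
        rw [sum_comm]
        exact sum_congr rfl fun _ _ => sum_comm
    _ ≤ ∑ k ∈ Icc 1 K, ∑ k' ∈ Icc 1 K, ((if k = k' then (N : ℝ) else 0) + B) :=
        sum_le_sum fun k hk => sum_le_sum fun k' hk' =>
          (le_abs_self _).trans (abs_sum_mul_le_of_mem_Icc hf q N hk hk')
    _ = K * N + K ^ 2 * B := by
        simp only [sum_add_distrib, sum_ite_eq, sum_const, Nat.card_Icc, nsmul_eq_mul]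
        rw [sum_ite_of_true fun _ h => h, sum_const, Nat.card_Icc]
        push_cast
        ring

theorem sq_mul_sum_Icc_comp_mul_le (hf : ∀ j, |f j| ≤ 1) {q : ℕ} (hq : 0 < q) (K M : ℕ) :
    (K * ∑ m ∈ Icc 1 M, f (q * m)) ^ 2
      ≤ 2 * M * (K * (q * M : ℕ) + K ^ 2 *
          (∑ d ∈ Icc 1 K, |autocorrelation f (q * d) (q * M)| + 2 * q * K)) + 8 * K ^ 4 := by
  set g : ℕ → ℝ := fun j => ∑ k ∈ Icc 1 K, f (j + q * k)
  set S := ∑ m ∈ Icc 1 M, f (q * m)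
  set G := ∑ m ∈ Icc 1 M, g (q * m)
  have hGS : |G - K * S| ≤ 2 * K ^ 2 := by
    have hG : G - K * S = ∑ k ∈ Icc 1 K, (∑ m ∈ Icc 1 M, f (q * (m + k)) - S) := by
      simp only [G, g, sum_sub_distrib, sum_const, Nat.card_Icc, add_tsub_cancel_right,
        nsmul_eq_mul, mul_add]
      rw [sum_comm]
    rw [hG]
    calc _ ≤ ∑ k ∈ Icc 1 K, |∑ m ∈ Icc 1 M, f (q * (m + k)) - S| := abs_sum_le_sum_abs _ _
      _ ≤ ∑ _k ∈ Icc 1 K, (2 * K : ℝ) := sum_le_sum fun k hk =>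
          (abs_sum_Icc_comp_add_sub_le (f := fun j => f (q * j)) (fun _ => hf _) M k).trans
            (by gcongr; exact (mem_Icc.1 hk).2)
      _ = 2 * K ^ 2 := by simp only [sum_const, Nat.card_Icc, nsmul_eq_mul]; push_cast; ring
  have hCS : G ^ 2 ≤ M * ∑ m ∈ Icc 1 M, g (q * m) ^ 2 := by
    simpa using sq_sum_le_card_mul_sum_sq (s := Icc 1 M) (f := fun m => g (q * m))
  have hsub : ∑ m ∈ Icc 1 M, g (q * m) ^ 2 ≤ ∑ j ∈ Icc 1 (q * M), g j ^ 2 := by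
    rw [← sum_image (f := fun j => g j ^ 2) fun a _ b _ h => Nat.eq_of_mul_eq_mul_left hq h]
    refine sum_le_sum_of_subset_of_nonneg (fun j hj => ?_) fun _ _ _ => sq_nonneg _
    obtain ⟨m, hm, rfl⟩ := mem_image.1 hj
    rw [mem_Icc] at hm ⊢
    exact ⟨le_mul_of_one_le_of_le hq hm.1, Nat.mul_le_mul_left q hm.2⟩
  have hmoment := sum_sq_sum_Icc_comp_add_mul_le hf q K (q * M)
  have hM : (0 : ℝ) ≤ M := M.cast_nonneg
  calc (K * S) ^ 2 ≤ 2 * G ^ 2 + 2 * (G - K * S) ^ 2 := by nlinarith [sq_nonneg (G + (G - K * S))]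
    _ ≤ 2 * (M * ∑ j ∈ Icc 1 (q * M), g j ^ 2) + 2 * (2 * K ^ 2) ^ 2 := by
        have hGS' := sq_le_sq' (abs_le.1 hGS).1 (abs_le.1 hGS).2
        have hG2 : G ^ 2 ≤ M * ∑ j ∈ Icc 1 (q * M), g j ^ 2 := hCS.trans (by gcongr)
        linarith
    _ ≤ _ := by nlinarith

theorem tendsto_sum_Icc_comp_mul_div_of_autocorrelation (hf : ∀ j, |f j| ≤ 1)
    (hcorr : ∀ t, 0 < t → Tendsto (fun N : ℕ => autocorrelation f t N / N) atTop (𝓝 0))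
    {q : ℕ} (hq : 0 < q) :
    Tendsto (fun M : ℕ => (∑ m ∈ Icc 1 M, f (q * m)) / M) atTop (𝓝 0) := by
  refine Metric.tendsto_atTop.2 fun ε hε => ?_
  -- `sq_mul_sum_Icc_comp_mul_le` gives `(S/M)^2 ≤ 2q/K + (2 T M + 4qK + 8K^2)/M` for `M ≥ 1`,
  -- so first make `2q/K < ε^2/2`, then let `M` grow.
  obtain ⟨K, hK⟩ := exists_nat_gt (4 * q / ε ^ 2)
  set T : ℕ → ℝ := fun M => ∑ d ∈ Icc 1 K, |autocorrelation f (q * d) (q * M)|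
  have hT : Tendsto (fun M : ℕ => 2 * (T M / M) + (4 * q * K + 8 * K ^ 2) / M) atTop (𝓝 0) := by
    have hC : ∀ d ∈ Icc 1 K,
        Tendsto (fun M : ℕ => |autocorrelation f (q * d) (q * M)| / M) atTop (𝓝 0) := by
      intro d hd
      have h := ((hcorr (q * d) (Nat.mul_pos hq (mem_Icc.1 hd).1)).comp
        (tendsto_id.const_mul_atTop' hq)).abs.const_mul (q : ℝ)
      rw [abs_zero, mul_zero] at h
      refine h.congr fun M => ?_
      rcases M.eq_zero_or_pos with rfl | hM
      · simp
      · have : (q : ℝ) ≠ 0 := by positivity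
        simp only [Function.comp_apply, id, abs_div, abs_mul, Nat.cast_mul, Nat.abs_cast]
        field_simp
    simpa [T, sum_div] using
      ((tendsto_finsetSum _ hC).const_mul 2).add (tendsto_const_div_atTop_nhds_zero_nat _)
  obtain ⟨M₀, hM₀⟩ := eventually_atTop.1 <|
    (hT.eventually (gt_mem_nhds (half_pos (pow_pos hε 2)))).and (eventually_ge_atTop 1)
  refine ⟨M₀, fun M hM => ?_⟩
  obtain ⟨hsmall, hM1⟩ := hM₀ M hM
  have hMpos : (0 : ℝ) < M := by exact_mod_cast hM1
  have hKε : 4 * q < K * ε ^ 2 := (div_lt_iff₀ (by positivity)).1 hK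
  have hKpos : (0 : ℝ) < K :=
    pos_of_mul_pos_left ((by positivity : (0 : ℝ) ≤ 4 * q).trans_lt hKε) (sq_nonneg ε)
  have hsmall' : 2 * T M + 4 * q * K + 8 * K ^ 2 < ε ^ 2 / 2 * M := by
    rw [mul_div_assoc', ← add_div, div_lt_iff₀ hMpos] at hsmall
    linarith
  set S := ∑ m ∈ Icc 1 M, f (q * m)
  have hbound := sq_mul_sum_Icc_comp_mul_le hf hq K M
  have hKS : (K * S) ^ 2 < (K * (ε * M)) ^ 2 := by
    have hT0 : 0 ≤ T M := sum_nonneg fun _ _ => abs_nonneg _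
    have hK4 : 8 * (K : ℝ) ^ 4 ≤ 8 * K ^ 4 * M :=
      le_mul_of_one_le_right (by positivity) (by exact_mod_cast hM1)
    push_cast at hbound
    nlinarith [mul_lt_mul_of_pos_left hKε (by positivity : (0 : ℝ) < K * M ^ 2 / 2),
      mul_lt_mul_of_pos_left hsmall' (by positivity : (0 : ℝ) < K ^ 2 * M)]
  have hKS' := abs_lt_of_sq_lt_sq hKS (by positivity)
  rw [abs_mul, Nat.abs_cast] at hKS'
  rw [Real.dist_eq, sub_zero, abs_div, Nat.abs_cast, div_lt_iff₀ hMpos]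
  exact lt_of_mul_lt_mul_left hKS' hKpos.le

end VanDerCorput

theorem exists_pos_le_card_filter_mem_of_hasDensity {ι : Type*} (s : Finset ι) {S : ι → Set ℕ}
    {d δ : ℝ} (hS : ∀ i ∈ s, HasDensity (S i) d) (hδ : δ < d) :
    ∃ m, 0 < m ∧ δ * #s ≤ #{i ∈ s | m ∈ S i} := by
  rcases s.eq_empty_or_nonempty with rfl | hs
  · exact ⟨1, one_pos, by simp⟩
  have hsum : Tendsto (fun N : ℕ => (∑ m ∈ Icc 1 N, (#{i ∈ s | m ∈ S i} : ℝ)) / N) atTop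
      (𝓝 (∑ _i ∈ s, d)) := by
    refine (tendsto_finsetSum s hS).congr fun N => ?_
    rw [← sum_div]
    congr 1
    exact_mod_cast sum_card_bipartiteAbove_eq_sum_card_bipartiteBelow (r := fun i m => m ∈ S i)
  rw [sum_const, nsmul_eq_mul] at hsum
  have hlt : δ * #s < #s * d := by rw [mul_comm]; gcongr
  obtain ⟨N, hN, hN1⟩ := ((hsum.eventually (lt_mem_nhds hlt)).and (eventually_ge_atTop 1)).exists
  rw [lt_div_iff₀ (by exact_mod_cast hN1)] at hN
  obtain ⟨m, hm, hδm⟩ : ∃ m ∈ Icc 1 N, δ * #s < #{i ∈ s | m ∈ S i} := by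
    refine exists_lt_of_sum_lt ?_
    simpa [sum_const, Nat.card_Icc, mul_comm] using hN
  exact ⟨m, (mem_Icc.1 hm).1, hδm.le⟩

noncomputable def window (A : Set ℕ) (L n : ℕ) : Fin L → Bool := fun i => decide (n + i ∈ A)

theorem IsNormalSet.tendsto_card_window_eq {A : Set ℕ} (hA : IsNormalSet A) {L : ℕ}
    (hL : 0 < L) (v : Fin L → Bool) :
    Tendsto (fun N : ℕ => (#{n ∈ Icc 1 N | window A L n = v} : ℝ) / N) atTop
      (𝓝 (1 / 2 ^ L)) := by
  have h := hA (List.ofFn v) (by simpa using hL.ne')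
  simp only [List.length_ofFn] at h
  convert h using 6 with N n
  simp only [window, funext_iff, List.get_ofFn, Fin.forall_iff, List.length_ofFn]
  refine forall₂_congr fun i hi => ?_
  cases hv : v ⟨i, hi⟩ <;> simp [hv]

theorem IsNormalSet.tendsto_average_window {A : Set ℕ} (hA : IsNormalSet A) {L : ℕ}
    (hL : 0 < L) (φ : (Fin L → Bool) → ℝ) :
    Tendsto (fun N : ℕ => (∑ n ∈ Icc 1 N, φ (window A L n)) / N) atTop
      (𝓝 ((∑ v, φ v) / 2 ^ L)) := by
  have h := tendsto_finsetSum univ fun v _ => (hA.tendsto_card_window_eq hL v).const_mul (φ v)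
  convert h using 2 with N
  · rw [← sum_fiberwise (Icc 1 N) (window A L), sum_div]
    refine sum_congr rfl fun v _ => ?_
    rw [sum_congr rfl fun n hn => by rw [(mem_filter.1 hn).2], sum_const, nsmul_eq_mul]
    ring
  · rw [← sum_mul, div_eq_mul_one_div]

noncomputable def signIndicator (A : Set ℕ) (j : ℕ) : ℝ := if j ∈ A then 1 else -1

theorem abs_signIndicator_le (A : Set ℕ) (j : ℕ) : |signIndicator A j| ≤ 1 := by
  unfold signIndicator
  split_ifs <;> simp

theorem IsNormalSet.tendsto_autocorrelation_signIndicator {A : Set ℕ} (hA : IsNormalSet A)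
    {t : ℕ} (ht : 0 < t) :
    Tendsto (fun N : ℕ => autocorrelation (signIndicator A) t N / N) atTop (𝓝 0) := by
  let sign : Bool → ℝ := fun b => if b then 1 else -1
  let φ : (Fin (t + 1) → Bool) → ℝ := fun v => sign (v 0) * sign (v (Fin.last t))
  let flip : (Fin (t + 1) → Bool) → Fin (t + 1) → Bool := fun v => Function.update v 0 !(v 0)
  have hflip : Function.Involutive flip := fun v => by simp [flip]
  have hφ_flip : ∀ v, φ (flip v) = -φ v := fun v => by
    have : Fin.last t ≠ 0 := Fin.ext_iff.not.2 (by simp only [Fin.val_last, Fin.val_zero]; omega)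
    simp only [φ, flip, Function.update_self, Function.update_of_ne this]
    cases v 0 <;> cases v (Fin.last t) <;> simp [sign]
  have hφ_sum : ∑ v, φ v = 0 := by
    have := Equiv.sum_comp hflip.toPerm φ
    simp only [Function.Involutive.coe_toPerm, hφ_flip, sum_neg_distrib] at this
    linarith
  have h := hA.tendsto_average_window t.succ_pos φ
  rw [hφ_sum, zero_div] at h
  refine h.congr fun N => ?_
  simp [autocorrelation, φ, sign, window, signIndicator]

theorem IsNormalSet.hasDensity_preimage_mul {A : Set ℕ} (hA : IsNormalSet A) {q : ℕ}
    (hq : 0 < q) : HasDensity ((q * ·) ⁻¹' A) (1 / 2) := by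
  have h := ((tendsto_sum_Icc_comp_mul_div_of_autocorrelation (abs_signIndicator_le A)
    (fun _ ht => hA.tendsto_autocorrelation_signIndicator ht) hq).div_const 2).const_add (1 / 2)
  rw [zero_div, add_zero] at h
  refine h.congr' ((eventually_ge_atTop 1).mono fun N hN => ?_)
  have hN : (N : ℝ) ≠ 0 := by positivity
  have hcard : (#{m ∈ Icc 1 N | m ∈ (q * ·) ⁻¹' A} : ℝ)
      = (N + ∑ m ∈ Icc 1 N, signIndicator A (q * m)) / 2 := by
    have hN' : (N : ℝ) = ∑ _m ∈ Icc 1 N, (1 : ℝ) := by simp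
    rw [natCast_card_filter, eq_div_iff two_ne_zero, sum_mul, hN', ← sum_add_distrib]
    refine sum_congr rfl fun m _ => ?_
    simp only [signIndicator, Set.mem_preimage]
    split_ifs <;> norm_num
  dsimp only
  rw [hcard]
  field_simp

theorem normal_set_contains_xy_eq_zsq (A : Set ℕ) (hA : IsNormalSet A) :
    ∃ x ∈ A, ∃ y ∈ A, ∃ z ∈ A, x ≠ y ∧ x * y = z ^ 2 := by
  obtain ⟨m, hm, hmany⟩ := exists_pos_le_card_filter_mem_of_hasDensity
    (range (cornersTheoremBound (1 / 3 / 3)))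
    (fun n _ => hA.hasDensity_preimage_mul (pow_pos two_pos n)) (by norm_num : (1 : ℝ) / 3 < 1 / 2)
  rw [card_range] at hmany
  have hAP := roth_3ap_theorem_nat (1 / 3) (by norm_num) le_rfl _ (filter_subset _ _) hmany
  simp only [ThreeAPFree, not_forall, exists_prop] at hAP
  obtain ⟨a, ha, b, hb, e, he, habe, hab⟩ := hAP
  refine ⟨2 ^ a * m, (mem_filter.1 ha).2, 2 ^ e * m, (mem_filter.1 he).2,
    2 ^ b * m, (mem_filter.1 hb).2, fun h => hab ?_, ?_⟩
  · have := Nat.pow_right_injective le_rfl (Nat.eq_of_mul_eq_mul_right hm h)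
    omega
  · rw [mul_mul_mul_comm, ← pow_add, habe, pow_add]
    ring
end
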